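/- Conjugation by the Fricke matrix J₂ maps Γ₂(2,4) onto the group of γ ∈ Sp(4,ℤ) with A ≡ D ≡ 1 (mod 2), C ≡ 0 (mod 4), diag(C) ≡ 0 (mod 8), and diag(B) ≡ 0 (mod 2). -/

import Mathlib

open Matrix

/-- The Fricke matrix J₂ = (1/√2)·(0 1₂; -2·1₂ 0) ∈ Sp(4,ℝ). -/
noncomputable def FrickeJ2 : Matrix (Fin 2 ⊕ Fin 2) (Fin 2 ⊕ Fin 2) ℝ :=
  (Real.sqrt 2)⁻¹ • Matrix.fromBlocks 0 1 (-(2 : ℝ) • (1 : Matrix (Fin 2) (Fin 2) ℝ)) 0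

/-- Γ₂(2,4) = {γ ∈ Sp(4,ℤ) : γ ≡ 1 (mod 2), diag(B) ≡ diag(C) ≡ 0 (mod 4)}. -/
def Gamma2_24 : Set (Matrix (Fin 2 ⊕ Fin 2) (Fin 2 ⊕ Fin 2) ℤ) :=
  {γ | γ ∈ Matrix.symplecticGroup (Fin 2) ℤ ∧
    (∀ i j, (2 : ℤ) ∣ (γ i j - (1 : Matrix (Fin 2 ⊕ Fin 2) (Fin 2 ⊕ Fin 2) ℤ) i j)) ∧
    (∀ i : Fin 2, (4 : ℤ) ∣ γ (Sum.inl i) (Sum.inr i)) ∧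
    (∀ i : Fin 2, (4 : ℤ) ∣ γ (Sum.inr i) (Sum.inl i))}

/-- The group {γ ∈ Sp(4,ℤ) : A ≡ D ≡ 1 (mod 2), C ≡ 0 (mod 4), diag(C) ≡ 0 (mod 8),
diag(B) ≡ 0 (mod 2)}. -/
def Gamma2_24_J2 : Set (Matrix (Fin 2 ⊕ Fin 2) (Fin 2 ⊕ Fin 2) ℤ) :=
  {γ | γ ∈ Matrix.symplecticGroup (Fin 2) ℤ ∧
    (∀ i j : Fin 2, (2 : ℤ) ∣ (γ (Sum.inl i) (Sum.inl j) - (1 : Matrix (Fin 2) (Fin 2) ℤ) i j)) ∧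
    (∀ i j : Fin 2, (2 : ℤ) ∣ (γ (Sum.inr i) (Sum.inr j) - (1 : Matrix (Fin 2) (Fin 2) ℤ) i j)) ∧
    (∀ i j : Fin 2, (4 : ℤ) ∣ γ (Sum.inr i) (Sum.inl j)) ∧
    (∀ i : Fin 2, (8 : ℤ) ∣ γ (Sum.inr i) (Sum.inl i)) ∧
    (∀ i : Fin 2, (2 : ℤ) ∣ γ (Sum.inl i) (Sum.inr i))}

/-- The image of a set of integral matrices under conjugation by the Fricke matrix. -/
noncomputable def frickeConj (S : Set (Matrix (Fin 2 ⊕ Fin 2) (Fin 2 ⊕ Fin 2) ℤ)) :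
    Set (Matrix (Fin 2 ⊕ Fin 2) (Fin 2 ⊕ Fin 2) ℤ) :=
  {M | ∃ γ ∈ S, M.map (Int.cast : ℤ → ℝ) =
    FrickeJ2 * γ.map (Int.cast : ℤ → ℝ) * FrickeJ2⁻¹}

/-
Since `J₂² = -1`, conjugation by `J₂` is `N ↦ -J₂ N J₂`, which acts on blocks as
`(A B; C D) ↦ (D, -C/2; -2B, A)`. As `J₂` is symplectic, conjugation preserves `Sp(4,ℝ)`, and for
integral matrices the relation `M = J₂ γ J₂⁻¹` becomes a list of entrywise identities under which
each congruence defining `Γ₂(2,4)` turns into one defining the target group. Conversely,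
`C ≡ 0 (mod 4)` makes `-C/2` integral, so every element of the target has an integral preimage.
-/

namespace SymplecticGroup

variable {l R S : Type*} [DecidableEq l] [Fintype l] [CommRing R] [CommRing S]

theorem map_mem_iff {f : R →+* S} (hf : Function.Injective f) {A : Matrix (l ⊕ l) (l ⊕ l) R} :
    A.map f ∈ symplecticGroup l S ↔ A ∈ symplecticGroup l R := by
  simp_rw [mem_iff, ← transpose_map, ← map_J _ f, ← Matrix.map_mul, (map_injective hf).eq_iff]

end SymplecticGroup

theorem inv_sqrt_two_mul_self : (Real.sqrt 2)⁻¹ * (Real.sqrt 2)⁻¹ = (2 : ℝ)⁻¹ := by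
  rw [← mul_inv, Real.mul_self_sqrt zero_le_two]

theorem FrickeJ2_mul_self : FrickeJ2 * FrickeJ2 = -1 := by
  rw [FrickeJ2, smul_mul_smul_comm, inv_sqrt_two_mul_self, fromBlocks_multiply, ← fromBlocks_one,
    fromBlocks_neg, fromBlocks_smul]
  simp

theorem FrickeJ2_inv : FrickeJ2⁻¹ = -FrickeJ2 :=
  inv_eq_right_inv (by rw [mul_neg, FrickeJ2_mul_self, neg_neg])

theorem FrickeJ2_mem_symplecticGroup : FrickeJ2 ∈ symplecticGroup (Fin 2) ℝ := by
  rw [SymplecticGroup.mem_iff, FrickeJ2, transpose_smul, smul_mul_assoc, mul_smul_comm,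
    smul_mul_assoc, smul_smul, inv_sqrt_two_mul_self, J, fromBlocks_transpose, fromBlocks_multiply,
    fromBlocks_multiply, fromBlocks_smul]
  simp

theorem FrickeJ2_conj (N : Matrix (Fin 2 ⊕ Fin 2) (Fin 2 ⊕ Fin 2) ℝ) :
    FrickeJ2 * N * FrickeJ2⁻¹ =
      fromBlocks N.toBlocks₂₂ (-(2 : ℝ)⁻¹ • N.toBlocks₂₁) ((-2 : ℝ) • N.toBlocks₁₂)
        N.toBlocks₁₁ := by
  conv_lhs => rw [← fromBlocks_toBlocks N]
  rw [FrickeJ2_inv, mul_neg, FrickeJ2, smul_mul_assoc, smul_mul_assoc, mul_smul_comm, smul_smul,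
    inv_sqrt_two_mul_self, fromBlocks_multiply, fromBlocks_multiply, fromBlocks_smul,
    fromBlocks_neg]
  simp [smul_smul]

theorem FrickeJ2_conj_mem_symplecticGroup_iff {N : Matrix (Fin 2 ⊕ Fin 2) (Fin 2 ⊕ Fin 2) ℝ} :
    FrickeJ2 * N * FrickeJ2⁻¹ ∈ symplecticGroup (Fin 2) ℝ ↔ N ∈ symplecticGroup (Fin 2) ℝ := by
  have hJ := FrickeJ2_mem_symplecticGroup
  have hJinv : FrickeJ2⁻¹ ∈ symplecticGroup (Fin 2) ℝ :=
    FrickeJ2_inv ▸ SymplecticGroup.neg_mem hJ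
  refine ⟨fun h => ?_, fun h => mul_mem (mul_mem hJ h) hJinv⟩
  have hdet : IsUnit FrickeJ2.det := SymplecticGroup.symplectic_det hJ
  have hN : N = FrickeJ2⁻¹ * (FrickeJ2 * N * FrickeJ2⁻¹) * FrickeJ2 := by
    simp only [← mul_assoc, nonsing_inv_mul _ hdet, one_mul]
    rw [mul_assoc, nonsing_inv_mul _ hdet, mul_one]
  rw [hN]
  exact mul_mem (mul_mem hJinv h) hJ

/-- Entrywise form of `M = J₂ γ J₂⁻¹` for integral `M` and `γ`. -/
def IsFrickeConj (M γ : Matrix (Fin 2 ⊕ Fin 2) (Fin 2 ⊕ Fin 2) ℤ) : Prop :=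
  ∀ i j : Fin 2,
    M (.inl i) (.inl j) = γ (.inr i) (.inr j) ∧ 2 * M (.inl i) (.inr j) = -γ (.inr i) (.inl j) ∧
      M (.inr i) (.inl j) = -2 * γ (.inl i) (.inr j) ∧ M (.inr i) (.inr j) = γ (.inl i) (.inl j)

theorem isFrickeConj_iff {M γ : Matrix (Fin 2 ⊕ Fin 2) (Fin 2 ⊕ Fin 2) ℤ} :
    IsFrickeConj M γ ↔
      M.map (Int.cast : ℤ → ℝ) = FrickeJ2 * γ.map (Int.cast : ℤ → ℝ) * FrickeJ2⁻¹ := by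
  have half (a b : ℤ) : (a : ℝ) = -2⁻¹ * b ↔ 2 * a = -b := by
    rw [← @Int.cast_inj ℝ]; push_cast; constructor <;> intro h <;> linarith
  have double (a b : ℤ) : (a : ℝ) = -2 * b ↔ a = -2 * b := by
    rw [← @Int.cast_inj ℝ]; push_cast; rfl
  rw [FrickeJ2_conj, ← Matrix.ext_iff]
  simp only [IsFrickeConj, Sum.forall, forall_and, map_apply, fromBlocks_apply₁₁,
    fromBlocks_apply₁₂, fromBlocks_apply₂₁, fromBlocks_apply₂₂, toBlocks₁₁, toBlocks₁₂, toBlocks₂₁,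
    toBlocks₂₂, of_apply,
    Matrix.smul_apply, smul_eq_mul, half, double, Int.cast_inj]
  tauto

theorem exists_isFrickeConj {M : Matrix (Fin 2 ⊕ Fin 2) (Fin 2 ⊕ Fin 2) ℤ}
    (hC : ∀ i j : Fin 2, 2 ∣ M (.inr i) (.inl j)) : ∃ γ, IsFrickeConj M γ :=
  ⟨fromBlocks (of fun i j => M (.inr i) (.inr j)) (of fun i j => -(M (.inr i) (.inl j) / 2))
    (of fun i j => -2 * M (.inl i) (.inr j)) (of fun i j => M (.inl i) (.inl j)), fun i j => by
      simp only [fromBlocks_apply₁₁, fromBlocks_apply₁₂, fromBlocks_apply₂₁, fromBlocks_apply₂₂,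
        of_apply, true_and, and_true]
      have := hC i j
      omega⟩

theorem IsFrickeConj.mem_symplecticGroup_iff {M γ : Matrix (Fin 2 ⊕ Fin 2) (Fin 2 ⊕ Fin 2) ℤ}
    (h : IsFrickeConj M γ) :
    M ∈ symplecticGroup (Fin 2) ℤ ↔ γ ∈ symplecticGroup (Fin 2) ℤ := by
  have hcast (A : Matrix (Fin 2 ⊕ Fin 2) (Fin 2 ⊕ Fin 2) ℤ) :
      A.map (Int.cast : ℤ → ℝ) ∈ symplecticGroup (Fin 2) ℝ ↔ A ∈ symplecticGroup (Fin 2) ℤ :=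
    SymplecticGroup.map_mem_iff (Int.castRingHom ℝ).injective_int
  rw [← hcast, ← hcast, isFrickeConj_iff.1 h]
  exact FrickeJ2_conj_mem_symplecticGroup_iff

theorem IsFrickeConj.mem_Gamma2_24_iff {M γ : Matrix (Fin 2 ⊕ Fin 2) (Fin 2 ⊕ Fin 2) ℤ}
    (h : IsFrickeConj M γ) : γ ∈ Gamma2_24 ↔ M ∈ Gamma2_24_J2 := by
  simp only [Gamma2_24, Gamma2_24_J2, Set.mem_ofPred_eq, Sum.forall, forall_and, ← fromBlocks_one,
    fromBlocks_apply₁₁, fromBlocks_apply₁₂, fromBlocks_apply₂₁, fromBlocks_apply₂₂,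
    Matrix.zero_apply, sub_zero, h.mem_symplecticGroup_iff]
  refine and_congr_right fun _ => ⟨?_, ?_⟩
  · rintro ⟨⟨⟨hA, -⟩, hB, hD⟩, hBdiag, hCdiag⟩
    refine ⟨fun i j => ?_, fun i j => ?_, fun i j => ?_, fun i => ?_, fun i => ?_⟩
    · rw [(h i j).1]; exact hD i j
    · rw [(h i j).2.2.2]; exact hA i j
    · have := (h i j).2.2.1; have := hB i j; omega
    · have := (h i i).2.2.1; have := hBdiag i; omega
    · have := (h i i).2.1; have := hCdiag i; omega
  · rintro ⟨hA, hD, hC, hCdiag, hBdiag⟩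
    refine ⟨⟨⟨fun i j => ?_, fun i j => ?_⟩, fun i j => ?_, fun i j => ?_⟩,
      fun i => ?_, fun i => ?_⟩
    · rw [← (h i j).2.2.2]; exact hD i j
    · have := (h i j).2.1; omega
    · have := (h i j).2.2.1; have := hC i j; omega
    · rw [← (h i j).1]; exact hA i j
    · have := (h i i).2.2.1; have := hCdiag i; omega
    · have := (h i i).2.1; have := hBdiag i; omega

theorem fricke_image_of_gamma2_24 :
    frickeConj Gamma2_24 = Gamma2_24_J2 := by
  ext M
  constructor
  · rintro ⟨γ, hγ, hM⟩
    exact (isFrickeConj_iff.2 hM).mem_Gamma2_24_iff.1 hγ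
  · intro hM
    have hC (i j : Fin 2) : 2 ∣ M (.inr i) (.inl j) := dvd_trans (by norm_num) (hM.2.2.2.1 i j)
    obtain ⟨γ, h⟩ := exists_isFrickeConj hC
    exact ⟨γ, h.mem_Gamma2_24_iff.2 hM, isFrickeConj_iff.1 h⟩
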